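/- Let G be a constraint graph, C_1 a legal configuration of G, e* an edge of G, and l ≥ 1. If there exists a reconfiguration sequence of length at most l starting at C_1 that reverses e* at some step, then there exists such a sequence of length at most l in which every edge reversed at any step lies at distance at most l − 1 from e* in the line graph of G. -/

import Mathlib

/-!
STATEMENT 10: Let G be a constraint graph, C_1 a legal configuration of G,
e* an edge of G, and l ≥ 1. If there exists a reconfiguration sequence of
length at most l starting at C_1 that reverses e* at some step, then there
exists such a sequence of length at most l in which every edge reversed at any
step lies at distance at most l − 1 from e* in the line graph of G.

"Lies at distance at most l − 1 from e*" is formalized as the existence of a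
walk from e* to the edge in the line graph of length at most l − 1.
-/

/-- A configuration of a constraint graph assigns to each edge one of its
two endpoints (its head). -/
def IsConf {V : Type} (G : SimpleGraph V) (C : Sym2 V → V) : Prop :=
  ∀ e ∈ G.edgeSet, C e ∈ e

/-- A configuration is legal if every vertex receives inflow (total weight of
edges whose head is that vertex) at least its minimum inflow. -/
def Legal {V : Type} [Fintype V] [DecidableEq V] (G : SimpleGraph V)
    [DecidableRel G.Adj] (w : Sym2 V → ℕ) (μ : V → ℕ) (C : Sym2 V → V) : Prop :=
  ∀ v : V, μ v ≤ ∑ e ∈ G.edgeFinset, if C e = v then w e else 0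

/-- Two configurations agree (as orientations of the edges of `G`). -/
def ConfEq {V : Type} (G : SimpleGraph V) (C C' : Sym2 V → V) : Prop :=
  ∀ e ∈ G.edgeSet, C e = C' e

/-- One reconfiguration step: exactly one edge changes its orientation. -/
def Step {V : Type} (G : SimpleGraph V) (C C' : Sym2 V → V) : Prop :=
  ∃ e ∈ G.edgeSet, C e ≠ C' e ∧ ∀ f ∈ G.edgeSet, f ≠ e → C f = C' f

/-- A reconfiguration sequence: every configuration is a legal configuration
and each consecutive pair differs in the orientation of exactly one edge. -/
def IsReconfSeq {V : Type} [Fintype V] [DecidableEq V] (G : SimpleGraph V)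
    [DecidableRel G.Adj] (w : Sym2 V → ℕ) (μ : V → ℕ) {m : ℕ}
    (Cs : Fin (m + 1) → Sym2 V → V) : Prop :=
  (∀ i, IsConf G (Cs i) ∧ Legal G w μ (Cs i)) ∧
    ∀ i : Fin m, Step G (Cs i.castSucc) (Cs i.succ)

/-- In the sequence, each edge is reversed at most once. -/
def AtMostOnce {V : Type} (G : SimpleGraph V) {m : ℕ}
    (Cs : Fin (m + 1) → Sym2 V → V) : Prop :=
  ∀ e ∈ G.edgeSet, ∀ i j : Fin m,
    Cs i.castSucc e ≠ Cs i.succ e → Cs j.castSucc e ≠ Cs j.succ e → i = j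

/-- The line graph of `G`, on the vertex set `Sym2 V`: two edges of `G` are
adjacent iff they are distinct and share an endpoint. -/
def LineG {V : Type} (G : SimpleGraph V) : SimpleGraph (Sym2 V) where
  Adj e f := e ≠ f ∧ e ∈ G.edgeSet ∧ f ∈ G.edgeSet ∧ ∃ v, v ∈ e ∧ v ∈ f
  symm := by
    refine ⟨?_⟩
    rintro e f ⟨h1, h2, h3, v, hv1, hv2⟩
    exact ⟨h1.symm, h3, h2, v, hv2, hv1⟩
  loopless := by refine ⟨?_⟩; rintro e ⟨h1, -⟩; exact h1 rfl


/-!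
Induction on the length, with radius `m - 1` for a sequence of length `m`. If the first step
of a sequence of length `m + 1` reverses `e*`, that step alone will do. Otherwise its tail, of
length `m`, reverses `e*`, so by induction it may be replaced by a sequence reversing only edges
within distance `m - 1` of `e*`. If the edge `f` reversed by the first step is within distance
`m` of `e*`, prepend that step. If not, no edge sharing an endpoint with `f` is ever reversed in
the new tail, so we drop the first step and keep `f` in its initial orientation throughout: at
an endpoint of `f` the inflow is then that of the initial legal configuration, and at any other
vertex it is unchanged.
-/

open Function

variable {V : Type} {G : SimpleGraph V}

def Reverses {m : ℕ} (Cs : Fin (m + 1) → Sym2 V → V) (e : Sym2 V) : Prop :=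
  ∃ i : Fin m, Cs i.castSucc e ≠ Cs i.succ e

def ReversesOnlyNear (G : SimpleGraph V) {m : ℕ} (Cs : Fin (m + 1) → Sym2 V → V)
    (e : Sym2 V) (r : ℕ) : Prop :=
  ∀ g ∈ G.edgeSet, Reverses Cs g → ∃ p : (LineG G).Walk e g, p.length ≤ r

lemma ReversesOnlyNear.mono {m r s : ℕ} {Cs : Fin (m + 1) → Sym2 V → V} {e : Sym2 V}
    (h : ReversesOnlyNear G Cs e r) (hrs : r ≤ s) : ReversesOnlyNear G Cs e s :=
  fun g hg hr => (h g hg hr).imp fun _ hp => hp.trans hrs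

lemma IsConf.update [DecidableEq V] {C : Sym2 V → V} (hC : IsConf G C) {f : Sym2 V} {a : V}
    (ha : a ∈ f) : IsConf G (update C f a) := by
  intro e he
  by_cases hef : e = f
  · subst hef; simpa using ha
  · simpa [hef] using hC e he

lemma Step.update [DecidableEq V] {C C' : Sym2 V → V} (h : Step G C C') {f : Sym2 V}
    (hf : C f = C' f) (a : V) : Step G (update C f a) (update C' f a) := by
  obtain ⟨g, hg, hne, hoth⟩ := h
  have hgf : g ≠ f := by rintro rfl; exact hne hf
  refine ⟨g, hg, by rwa [update_of_ne hgf, update_of_ne hgf], fun e he heg => ?_⟩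
  by_cases hef : e = f
  · simp [hef]
  · simpa [hef] using hoth e he heg

lemma Step.of_confEq_right {C C' C'' : Sym2 V → V} (h : Step G C C') (h' : ConfEq G C'' C') :
    Step G C C'' := by
  obtain ⟨g, hg, hne, hoth⟩ := h
  exact ⟨g, hg, by rwa [h' g hg], fun e he heg => by rw [h' e he]; exact hoth e he heg⟩

lemma eq_of_not_reverses {m : ℕ} {Cs : Fin (m + 1) → Sym2 V → V} {g : Sym2 V}
    (h : ¬ Reverses Cs g) (i : Fin (m + 1)) : Cs i g = Cs 0 g := by
  induction i using Fin.induction with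
  | zero => rfl
  | succ i ih => rw [← ih]; exact (not_not.1 (not_exists.1 h i)).symm

lemma reverses_cons_iff {m : ℕ} {C : Sym2 V → V} {Ds : Fin (m + 1) → Sym2 V → V}
    {g : Sym2 V} :
    Reverses (Fin.cons C Ds : Fin (m + 2) → Sym2 V → V) g ↔
      C g ≠ Ds 0 g ∨ Reverses Ds g := by
  simp [Reverses, Fin.exists_fin_succ]

lemma Reverses.tail {m : ℕ} {Cs : Fin (m + 2) → Sym2 V → V} {g : Sym2 V}
    (h : Reverses Cs g) (h0 : Cs 0 g = Cs 1 g) : Reverses (Fin.tail Cs) g := by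
  obtain ⟨i, hi⟩ := h
  induction i using Fin.cases with
  | zero => exact absurd h0 (by simpa using hi)
  | succ i => exact ⟨i, by simpa [Fin.tail] using hi⟩

lemma reverses_update_iff [DecidableEq V] {m : ℕ} {Ds : Fin (m + 1) → Sym2 V → V}
    {f g : Sym2 V} {a : V} :
    Reverses (fun i => update (Ds i) f a) g ↔ g ≠ f ∧ Reverses Ds g := by
  by_cases hgf : g = f <;> simp [Reverses, hgf]

lemma not_reverses_of_far {m r : ℕ} {Ds : Fin (m + 1) → Sym2 V → V} {e f g : Sym2 V}
    (hnear : ReversesOnlyNear G Ds e r)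
    (hfar : ¬ ∃ p : (LineG G).Walk e f, p.length ≤ r + 1) (hf : f ∈ G.edgeSet)
    (hg : g = f ∨ (LineG G).Adj f g) : ¬ Reverses Ds g := by
  rintro hr
  rcases hg with rfl | hfg
  · obtain ⟨p, hp⟩ := hnear g hf hr
    exact hfar ⟨p, by omega⟩
  · obtain ⟨p, hp⟩ := hnear g hfg.2.2.1 hr
    exact hfar ⟨p.concat hfg.symm, by rw [SimpleGraph.Walk.length_concat]; omega⟩

lemma confEq_update [DecidableEq V] {C C' : Sym2 V → V} {f : Sym2 V}
    (h : ∀ g ∈ G.edgeSet, g ≠ f → C' g = C g) : ConfEq G (update C' f (C f)) C := by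
  intro g hg
  by_cases hgf : g = f
  · simp [hgf]
  · rw [update_of_ne hgf, h g hg hgf]

def inflow [Fintype V] [DecidableEq V] (G : SimpleGraph V) [DecidableRel G.Adj]
    (w : Sym2 V → ℕ) (C : Sym2 V → V) (x : V) : ℕ :=
  ∑ e ∈ G.edgeFinset, if C e = x then w e else 0

section Reconfiguration

variable [Fintype V] [DecidableEq V] [DecidableRel G.Adj] {w : Sym2 V → ℕ} {μ : V → ℕ}

lemma inflow_congr {C C' : Sym2 V → V} (hC : IsConf G C) (hC' : IsConf G C') {x : V}
    (h : ∀ e ∈ G.edgeSet, x ∈ e → C e = C' e) : inflow G w C x = inflow G w C' x := by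
  refine Finset.sum_congr rfl fun e he => ?_
  rw [SimpleGraph.mem_edgeFinset] at he
  by_cases hx : x ∈ e
  · rw [h e he hx]
  · have hCx : C e ≠ x := fun h => hx (h ▸ hC e he)
    have hC'x : C' e ≠ x := fun h => hx (h ▸ hC' e he)
    simp [hCx, hC'x]

lemma IsReconfSeq.tail {m : ℕ} {Cs : Fin (m + 2) → Sym2 V → V} (h : IsReconfSeq G w μ Cs) :
    IsReconfSeq G w μ (Fin.tail Cs) :=
  ⟨fun i => h.1 i.succ, fun i => by simpa only [Fin.tail, Fin.succ_castSucc] using h.2 i.succ⟩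

lemma IsReconfSeq.cons {m : ℕ} {C : Sym2 V → V} {Ds : Fin (m + 1) → Sym2 V → V}
    (hC : IsConf G C ∧ Legal G w μ C) (hstep : Step G C (Ds 0)) (hDs : IsReconfSeq G w μ Ds) :
    IsReconfSeq G w μ (Fin.cons C Ds : Fin (m + 2) → Sym2 V → V) := by
  refine ⟨Fin.cases (by simpa using hC) fun i => by simpa using hDs.1 i, fun i => ?_⟩
  induction i using Fin.cases with
  | zero => simpa using hstep
  | succ i => simpa [← Fin.succ_castSucc] using hDs.2 i

lemma IsReconfSeq.update {m : ℕ} {C : Sym2 V → V} {Ds : Fin (m + 1) → Sym2 V → V}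
    {f : Sym2 V} (hC : IsConf G C ∧ Legal G w μ C) (hf : f ∈ G.edgeSet)
    (hDs : IsReconfSeq G w μ Ds) (h0 : ∀ g ∈ G.edgeSet, g ≠ f → Ds 0 g = C g)
    (hfix : ¬ Reverses Ds f) (hadj : ∀ g, (LineG G).Adj f g → ¬ Reverses Ds g) :
    IsReconfSeq G w μ (fun i => update (Ds i) f (C f)) := by
  refine ⟨fun i => ⟨(hDs.1 i).1.update (hC.1 f hf), fun x => ?_⟩, fun i => ?_⟩
  · have hconf := (hDs.1 i).1.update (hC.1 f hf)
    show μ x ≤ inflow G w _ x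
    by_cases hx : x ∈ f
    · refine inflow_congr hconf hC.1 (fun e he hxe => ?_) ▸ hC.2 x
      by_cases hef : e = f
      · simp [hef]
      · have hfe : (LineG G).Adj f e := ⟨Ne.symm hef, hf, he, x, hx, hxe⟩
        rw [update_of_ne hef, eq_of_not_reverses (hadj e hfe), h0 e he hef]
    · refine inflow_congr hconf (hDs.1 i).1 (fun e _ hxe => ?_) ▸ (hDs.1 i).2 x
      have hef : e ≠ f := by rintro rfl; exact hx hxe
      simp [hef]
  · exact (hDs.2 i).update
      (by rw [eq_of_not_reverses hfix i.castSucc, eq_of_not_reverses hfix i.succ]) _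

lemma exists_reconfSeq_freeze {m r : ℕ} {C : Sym2 V → V} {Ds : Fin (m + 1) → Sym2 V → V}
    {e f : Sym2 V} (hC : IsConf G C ∧ Legal G w μ C) (hf : f ∈ G.edgeSet)
    (hDs : IsReconfSeq G w μ Ds) (h0 : ∀ g ∈ G.edgeSet, g ≠ f → Ds 0 g = C g)
    (hDe : Reverses Ds e) (hnear : ReversesOnlyNear G Ds e r)
    (hfar : ¬ ∃ p : (LineG G).Walk e f, p.length ≤ r + 1) :
    ∃ Ds' : Fin (m + 1) → Sym2 V → V, ConfEq G (Ds' 0) C ∧ IsReconfSeq G w μ Ds' ∧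
      Reverses Ds' e ∧ ReversesOnlyNear G Ds' e r := by
  have hfar' : ∀ g, g = f ∨ (LineG G).Adj f g → ¬ Reverses Ds g := fun _ =>
    not_reverses_of_far hnear hfar hf
  have hef : e ≠ f := by rintro rfl; exact hfar ⟨.nil, by simp⟩
  exact ⟨fun i => update (Ds i) f (C f), confEq_update h0,
    IsReconfSeq.update hC hf hDs h0 (hfar' f (.inl rfl)) (fun g hfg => hfar' g (.inr hfg)),
    reverses_update_iff.2 ⟨hef, hDe⟩, fun g hg hr => hnear g hg (reverses_update_iff.1 hr).2⟩

theorem exists_reconfSeq_reverses_near {e : Sym2 V} (he : e ∈ G.edgeSet) :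
    ∀ (m : ℕ) (Cs : Fin (m + 1) → Sym2 V → V), IsReconfSeq G w μ Cs → Reverses Cs e →
      ∃ m' ≤ m, ∃ Ds : Fin (m' + 1) → Sym2 V → V, ConfEq G (Ds 0) (Cs 0) ∧
        IsReconfSeq G w μ Ds ∧ Reverses Ds e ∧ ReversesOnlyNear G Ds e (m - 1)
  | 0, _, _, ⟨i, _⟩ => i.elim0
  | m + 1, Cs, hCs, hrev => by
    have hstep : Step G (Cs 0) (Cs 1) := by simpa using hCs.2 0
    obtain ⟨f, hf, hCf, hoth⟩ := id hstep
    have hchanged : ∀ g ∈ G.edgeSet, Cs 0 g ≠ Cs 1 g → g = f := fun g hg hne =>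
      by_contra fun hgf => hne (hoth g hg hgf)
    by_cases h0 : Cs 0 e ≠ Cs 1 e
    · obtain rfl := hchanged e he h0
      refine ⟨1, by omega, Fin.cons (Cs 0) fun _ => Cs 1, fun _ _ => rfl,
        IsReconfSeq.cons (hCs.1 0) hstep ⟨fun _ => hCs.1 1, fun i => i.elim0⟩,
        reverses_cons_iff.2 (Or.inl h0), fun g hg hr => ?_⟩
      rcases reverses_cons_iff.1 hr with h | ⟨i, _⟩
      · obtain rfl := hchanged g hg h
        exact ⟨.nil, by simp⟩
      · exact i.elim0
    obtain ⟨m', hm', Ds, hDs0, hDs, hDe, hnear⟩ :=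
      exists_reconfSeq_reverses_near he m (Fin.tail Cs) hCs.tail (hrev.tail (not_not.1 h0))
    have hDs0' : ConfEq G (Ds 0) (Cs 1) := fun g hg => by simpa [Fin.tail] using hDs0 g hg
    by_cases hfnear : ∃ p : (LineG G).Walk e f, p.length ≤ m
    · refine ⟨m' + 1, by omega, Fin.cons (Cs 0) Ds, fun _ _ => rfl,
        IsReconfSeq.cons (hCs.1 0) (hstep.of_confEq_right hDs0') hDs,
        reverses_cons_iff.2 (Or.inr hDe), fun g hg hr => ?_⟩
      rcases reverses_cons_iff.1 hr with h | h
      · obtain rfl := hchanged g hg (hDs0' g hg ▸ h)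
        exact hfnear
      · exact (hnear.mono (by omega)) g hg h
    have hm : 0 < m := (hDe.elim fun j _ => j.pos).trans_le hm'
    have h0 : ∀ g ∈ G.edgeSet, g ≠ f → Ds 0 g = Cs 0 g := fun g hg hgf =>
      (hDs0' g hg).trans (hoth g hg hgf).symm
    obtain ⟨Ds', hDs'0, hDs', hDs'e, hnear'⟩ :=
      exists_reconfSeq_freeze (hCs.1 0) hf hDs h0 hDe hnear (by rwa [Nat.sub_add_cancel hm])
    exact ⟨m', by omega, Ds', hDs'0, hDs', hDs'e, hnear'.mono (by omega)⟩

end Reconfiguration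

theorem stmt10_general {V : Type} [Fintype V] [DecidableEq V] (G : SimpleGraph V)
    [DecidableRel G.Adj] (w : Sym2 V → ℕ) (μ : V → ℕ)
    (C₁ : Sym2 V → V)
    (estar : Sym2 V) (he : estar ∈ G.edgeSet) (l : ℕ)
    (h : ∃ (m : ℕ) (Cs : Fin (m + 1) → Sym2 V → V), m ≤ l ∧
        ConfEq G (Cs 0) C₁ ∧ IsReconfSeq G w μ Cs ∧
        ∃ i : Fin m, Cs i.castSucc estar ≠ Cs i.succ estar) :
    ∃ (m : ℕ) (Cs : Fin (m + 1) → Sym2 V → V), m ≤ l ∧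
        ConfEq G (Cs 0) C₁ ∧ IsReconfSeq G w μ Cs ∧
        (∃ i : Fin m, Cs i.castSucc estar ≠ Cs i.succ estar) ∧
        ∀ f ∈ G.edgeSet, (∃ i : Fin m, Cs i.castSucc f ≠ Cs i.succ f) →
          ∃ p : (LineG G).Walk estar f, p.length ≤ l - 1 := by
  obtain ⟨m, Cs, hml, hCs0, hCs, hrev⟩ := h
  obtain ⟨m', hm', Ds, hDs0, hDs, hDe, hnear⟩ := exists_reconfSeq_reverses_near he m Cs hCs hrev
  exact ⟨m', Ds, hm'.trans hml, fun g hg => (hDs0 g hg).trans (hCs0 g hg), hDs, hDe,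
    hnear.mono (by omega)⟩

theorem stmt10 {V : Type} [Fintype V] [DecidableEq V] (G : SimpleGraph V)
    [DecidableRel G.Adj] (w : Sym2 V → ℕ) (μ : V → ℕ)
    (C₁ : Sym2 V → V) (h₁ : IsConf G C₁ ∧ Legal G w μ C₁)
    (estar : Sym2 V) (he : estar ∈ G.edgeSet) (l : ℕ) (hl : 1 ≤ l)
    (h : ∃ (m : ℕ) (Cs : Fin (m + 1) → Sym2 V → V), m ≤ l ∧
        ConfEq G (Cs 0) C₁ ∧ IsReconfSeq G w μ Cs ∧
        ∃ i : Fin m, Cs i.castSucc estar ≠ Cs i.succ estar) :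
    ∃ (m : ℕ) (Cs : Fin (m + 1) → Sym2 V → V), m ≤ l ∧
        ConfEq G (Cs 0) C₁ ∧ IsReconfSeq G w μ Cs ∧
        (∃ i : Fin m, Cs i.castSucc estar ≠ Cs i.succ estar) ∧
        ∀ f ∈ G.edgeSet, (∃ i : Fin m, Cs i.castSucc f ≠ Cs i.succ f) →
          ∃ p : (LineG G).Walk estar f, p.length ≤ l - 1 :=
  stmt10_general G w μ C₁ estar he l h
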